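/- Let ν > 0 and define K(ν,z) := ∫₀^∞ exp(−z·cosh t)·cosh(ν·t) dt for z > 0. Then z^ν · K(ν,z) tends to 2^(ν−1)·Γ(ν) as z → 0 from the right, where Γ is the real Gamma function. -/

import Mathlib

/-!
Substituting `x = (z/2) eᵗ` turns `z^ν K(ν, z)` into
`2^(ν-1) ∫_{z/2}^∞ e^{-x - z²/(4x)} (x^ν + (z/2)^{2ν} x^{-ν}) dx / x`.
For `x > z/2` the bracket is at most `2 x^ν`, so the integrand is dominated by twice the Gamma
integrand `e^{-x} x^{ν-1}`, and it tends to that integrand as `z → 0⁺`; dominated convergence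
gives the limit `2^(ν-1) Γ(ν)`.
-/

open Set Filter MeasureTheory Real Topology

noncomputable def besselK (ν z : ℝ) : ℝ :=
  ∫ t in Set.Ioi (0 : ℝ), Real.exp (-z * Real.cosh t) * Real.cosh (ν * t)

noncomputable def besselKSubstIntegrand (ν z x : ℝ) : ℝ :=
  exp (-x - z ^ 2 / (4 * x)) * (x ^ ν + (z / 2) ^ (2 * ν) * x ^ (-ν)) / x

lemma image_const_mul_exp_Ioi_zero {c : ℝ} (hc : 0 < c) :
    (fun t => c * exp t) '' Ioi 0 = Ioi c := by
  rw [show (fun t => c * exp t) = (c * ·) ∘ exp from rfl, image_comp, image_exp_Ioi,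
    image_mul_left_Ioi hc, exp_zero, mul_one]

lemma rpow_const_mul_exp {c : ℝ} (hc : 0 ≤ c) (s t : ℝ) :
    (c * exp t) ^ s = c ^ s * exp (s * t) := by
  rw [mul_rpow hc (exp_pos t).le, ← exp_mul, mul_comm t]

lemma two_rpow_mul_besselKSubstIntegrand_exp (ν : ℝ) {z : ℝ} (hz : 0 < z) (t : ℝ) :
    2 ^ (ν - 1) * (z / 2 * exp t * besselKSubstIntegrand ν z (z / 2 * exp t))
      = z ^ ν * (exp (-z * cosh t) * cosh (ν * t)) := by
  have hc : 0 < z / 2 := by positivity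
  have hcosh : -(z / 2 * exp t) - z ^ 2 / (4 * (z / 2 * exp t)) = -z * cosh t := by
    rw [cosh_eq, exp_neg]
    field_simp
    ring
  have hpow : (z / 2) ^ (2 * ν) * (z / 2) ^ (-ν) = (z / 2) ^ ν := by
    rw [← rpow_add hc]
    ring_nf
  have htwo : 2 ^ (ν - 1) * (z / 2) ^ ν = z ^ ν / 2 := by
    rw [rpow_sub two_pos, rpow_one, div_rpow hz.le zero_le_two]
    field_simp
  unfold besselKSubstIntegrand
  rw [hcosh, mul_div_assoc', mul_div_cancel_left₀ _ (by positivity), rpow_const_mul_exp hc.le,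
    rpow_const_mul_exp hc.le, cosh_eq (ν * t), neg_mul ν t]
  linear_combination 2 ^ (ν - 1) * exp (-z * cosh t) * exp (-(ν * t)) * hpow
    + exp (-z * cosh t) * (exp (ν * t) + exp (-(ν * t))) * htwo

lemma rpow_mul_besselK_eq_integral (ν : ℝ) {z : ℝ} (hz : 0 < z) :
    z ^ ν * besselK ν z = 2 ^ (ν - 1) * ∫ x in Ioi (z / 2), besselKSubstIntegrand ν z x := by
  have hc : 0 < z / 2 := by positivity
  have hderiv : ∀ t ∈ Ioi (0 : ℝ),
      HasDerivWithinAt (fun t => z / 2 * exp t) (z / 2 * exp t) (Ioi 0) t :=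
    fun t _ => ((hasDerivAt_exp t).const_mul (z / 2)).hasDerivWithinAt
  have hinj : InjOn (fun t => z / 2 * exp t) (Ioi 0) :=
    fun a _ b _ h => exp_injective (mul_left_cancel₀ hc.ne' h)
  rw [besselK, ← integral_const_mul, ← integral_const_mul, ← image_const_mul_exp_Ioi_zero hc,
    integral_image_eq_integral_abs_deriv_smul measurableSet_Ioi hderiv hinj]
  refine setIntegral_congr_fun measurableSet_Ioi fun t _ => ?_
  rw [abs_of_pos (by positivity), smul_eq_mul, ← two_rpow_mul_besselKSubstIntegrand_exp ν hz,
    mul_left_comm]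

lemma norm_besselKSubstIntegrand_le {ν z x : ℝ} (hν : 0 ≤ ν) (hz : 0 ≤ z) (hx : z / 2 < x) :
    ‖besselKSubstIntegrand ν z x‖ ≤ 2 * (exp (-x) * x ^ (ν - 1)) := by
  have hx0 : 0 < x := by linarith
  have hexp : exp (-x - z ^ 2 / (4 * x)) ≤ exp (-x) :=
    exp_le_exp.mpr (sub_le_self _ (by positivity))
  have hpow : (z / 2) ^ (2 * ν) * x ^ (-ν) ≤ x ^ ν :=
    calc (z / 2) ^ (2 * ν) * x ^ (-ν) ≤ x ^ (2 * ν) * x ^ (-ν) := by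
          gcongr
      _ = x ^ ν := by rw [← rpow_add hx0]; ring_nf
  rw [norm_of_nonneg (by unfold besselKSubstIntegrand; positivity), besselKSubstIntegrand,
    rpow_sub_one hx0.ne']
  calc exp (-x - z ^ 2 / (4 * x)) * (x ^ ν + (z / 2) ^ (2 * ν) * x ^ (-ν)) / x
      ≤ exp (-x) * (x ^ ν + x ^ ν) / x := by gcongr
    _ = 2 * (exp (-x) * (x ^ ν / x)) := by ring

lemma tendsto_besselKSubstIntegrand_zero {ν x : ℝ} (hν : 0 < ν) (hx : 0 < x) :
    Tendsto (fun z => besselKSubstIntegrand ν z x) (𝓝 0) (𝓝 (exp (-x) * x ^ (ν - 1))) := by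
  have hcont : ContinuousAt (fun z => besselKSubstIntegrand ν z x) 0 := by
    unfold besselKSubstIntegrand
    have := continuousAt_rpow_const 0 (2 * ν) (Or.inr (by positivity))
    fun_prop (disch := positivity)
  convert hcont.tendsto using 2
  simp [besselKSubstIntegrand, zero_rpow (by positivity : 2 * ν ≠ 0), rpow_sub_one hx.ne',
    mul_div_assoc]

lemma tendsto_integral_besselKSubstIntegrand {ν : ℝ} (hν : 0 < ν) :
    Tendsto (fun z => ∫ x in Ioi (z / 2), besselKSubstIntegrand ν z x) (𝓝[>] 0)
      (𝓝 (Gamma ν)) := by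
  have hindicator : (fun z => ∫ x in Ioi 0, (Ioi (z / 2)).indicator (besselKSubstIntegrand ν z) x)
      =ᶠ[𝓝[>] 0] fun z => ∫ x in Ioi (z / 2), besselKSubstIntegrand ν z x :=
    eventually_nhdsWithin_of_forall fun z (hz : 0 < z) => by
      dsimp only
      rw [setIntegral_indicator measurableSet_Ioi,
        inter_eq_right.mpr (Ioi_subset_Ioi (by positivity))]
  rw [Gamma_eq_integral hν]
  refine Tendsto.congr' hindicator ?_
  refine tendsto_integral_filter_of_dominated_convergence
    (fun x => 2 * (exp (-x) * x ^ (ν - 1))) ?_ ?_ ((GammaIntegral_convergent hν).const_mul 2) ?_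
  · refine Eventually.of_forall fun z => (Measurable.aestronglyMeasurable ?_).indicator
      measurableSet_Ioi
    unfold besselKSubstIntegrand
    fun_prop
  · filter_upwards [self_mem_nhdsWithin] with z (hz : 0 < z)
    refine (ae_restrict_iff' measurableSet_Ioi).mpr (ae_of_all _ fun x (hx : 0 < x) => ?_)
    by_cases hzx : x ∈ Ioi (z / 2)
    · rw [indicator_of_mem hzx]
      exact norm_besselKSubstIntegrand_le hν.le hz.le hzx
    · rw [indicator_of_notMem hzx, norm_zero]
      positivity
  · refine (ae_restrict_iff' measurableSet_Ioi).mpr (ae_of_all _ fun x (hx : 0 < x) => ?_)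
    refine ((tendsto_besselKSubstIntegrand_zero hν hx).mono_left nhdsWithin_le_nhds).congr' ?_
    filter_upwards [Ioo_mem_nhdsGT (by positivity : (0 : ℝ) < 2 * x)] with z hz
    exact (indicator_of_mem (mem_Ioi.mpr (by linarith [hz.2])) _).symm

theorem stmt7 (ν : ℝ) (hν : 0 < ν) :
    Tendsto (fun z : ℝ => z ^ ν * besselK ν z)
      (nhdsWithin 0 (Ioi (0 : ℝ)))
      (nhds ((2 : ℝ) ^ (ν - 1) * Real.Gamma ν)) :=
  ((tendsto_integral_besselKSubstIntegrand hν).const_mul _).congr'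
    (eventually_nhdsWithin_of_forall fun _ hz => (rpow_mul_besselK_eq_integral ν hz).symm)
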